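/- Under the recurrence x P_n = P_{n+1} + Σ_{j=0}^{r} a_{n,j} P_{n−j}, the recurrence coefficients admit the integral representation a_{n,j} = ∫ x P_n(x) Σ_{ℓ=1}^{r} A_{n+1−j,ℓ}(x) dμ_ℓ(x) for j = 0,1,...,min(r,n), where A_{k,ℓ} are the type I multiple orthogonal polynomials normalized by ∫ x^{k−1} Σ_ℓ A_{k,ℓ}(x) dμ_ℓ(x) = 1. -/

import Mathlib

open Polynomial

/-- The `j`-th entry of the proper multi-index `ν_n`. -/
def properIndex (r n : ℕ) (j : Fin r) : ℕ := (n + r - 1 - j.val) / r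

/-- Type II orthogonality conditions (measures identified with moment functionals). -/
def TypeIISol (r : ℕ) (μ : Fin r → (Polynomial ℂ →ₗ[ℂ] ℂ)) (n : ℕ) (P : Polynomial ℂ) : Prop :=
  P.degree ≤ (n : WithBot ℕ) ∧ ∀ j : Fin r, ∀ ℓ < properIndex r n j, μ j (X ^ ℓ * P) = 0

/-- The proper multi-index `ν_n` is normal. -/
def NormalIndex (r : ℕ) (μ : Fin r → (Polynomial ℂ →ₗ[ℂ] ℂ)) (n : ℕ) : Prop :=
  (∀ P, TypeIISol r μ n P → P = 0 ∨ P.natDegree = n) ∧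
  (∀ P Q, TypeIISol r μ n P → TypeIISol r μ n Q → P ≠ 0 → ∃ c : ℂ, Q = c • P)

/-- Weakly complete system: all proper multi-indices are normal. -/
def WeaklyComplete (r : ℕ) (μ : Fin r → (Polynomial ℂ →ₗ[ℂ] ℂ)) : Prop :=
  ∀ n, NormalIndex r μ n

/-- The type I multiple orthogonal vector polynomials `A_n = (A_{n,1},…,A_{n,r})`,
with the normalization `∫ x^{n-1} ∑_j A_{n,j}(x) dμ_j(x) = 1`. -/
def TypeINormalized (r : ℕ) (μ : Fin r → (Polynomial ℂ →ₗ[ℂ] ℂ))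
    (A : ℕ → Fin r → Polynomial ℂ) : Prop :=
  ∀ n, 1 ≤ n →
    (∀ j : Fin r, (A n j).degree < (properIndex r n j : WithBot ℕ)) ∧
    (∀ ℓ : ℕ, ℓ + 2 ≤ n → ∑ j : Fin r, μ j (X ^ ℓ * A n j) = 0) ∧
    (∑ j : Fin r, μ j (X ^ (n - 1) * A n j) = 1)

/-! The pairing `L_m(Q) = ∑_ℓ ∫ Q A_{m,ℓ} dμ_ℓ` is biorthogonal to the type II polynomials,
`L_m(P_k) = δ_{k+1,m}`: for `k ≥ m` by type II orthogonality of `P_k` (the degrees of the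
`A_{m,ℓ}` stay below `ν_k`), and for `k < m` by type I orthogonality of `A_m` together with its
normalization and the monicity of `P_k`. Applying `L_{n+1-j}` to the recurrence therefore kills
every term except `a_{n,j}`. -/

lemma Polynomial.linearMap_eq_sum_coeff_smul {R M : Type*} [CommSemiring R] [AddCommMonoid M]
    [Module R M] (φ : R[X] →ₗ[R] M) {Q : R[X]} {n : ℕ} (hQ : Q.degree < n) :
    φ Q = ∑ i ∈ Finset.range n, Q.coeff i • φ (X ^ i) := by
  conv_lhs => rw [← Q.sum_monomial_eq, ← sum_fin _ (fun _ => monomial_zero_right _) hQ]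
  rw [map_sum, ← Fin.sum_univ_eq_sum_range (fun i => Q.coeff i • φ (X ^ i))]
  simp only [← smul_X_eq_monomial, map_smul]

lemma properIndex_mono (r : ℕ) {m k : ℕ} (h : m ≤ k) (j : Fin r) :
    properIndex r m j ≤ properIndex r k j :=
  Nat.div_le_div_right (by omega)

lemma TypeIISol.map_mul_eq_zero {r n : ℕ} {μ : Fin r → (Polynomial ℂ →ₗ[ℂ] ℂ)}
    {P : Polynomial ℂ} (hP : TypeIISol r μ n P) (j : Fin r) {Q : Polynomial ℂ}
    (hQ : Q.degree < (properIndex r n j : WithBot ℕ)) :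
    μ j (Q * P) = 0 := by
  rw [← LinearMap.mulRight_apply (R := ℂ), ← LinearMap.comp_apply,
    linearMap_eq_sum_coeff_smul _ hQ]
  refine Finset.sum_eq_zero fun i hi => ?_
  rw [LinearMap.comp_apply, LinearMap.mulRight_apply, hP.2 j i (Finset.mem_range.mp hi), smul_zero]

noncomputable def typeIPairing {r : ℕ} (μ : Fin r → (Polynomial ℂ →ₗ[ℂ] ℂ))
    (B : Fin r → Polynomial ℂ) :
    Polynomial ℂ →ₗ[ℂ] ℂ :=
  ∑ ℓ, (μ ℓ).comp (LinearMap.mulRight ℂ (B ℓ))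

section typeIPairing

variable {r : ℕ} {μ : Fin r → (Polynomial ℂ →ₗ[ℂ] ℂ)}

lemma typeIPairing_apply (B : Fin r → Polynomial ℂ) (Q : Polynomial ℂ) :
    typeIPairing μ B Q = ∑ ℓ, μ ℓ (Q * B ℓ) := by
  simp only [typeIPairing, LinearMap.sum_apply, LinearMap.comp_apply,
    LinearMap.mulRight_apply]

lemma TypeIISol.typeIPairing_eq_zero {k : ℕ} {P : Polynomial ℂ} (hP : TypeIISol r μ k P)
    {B : Fin r → Polynomial ℂ} (hB : ∀ ℓ, (B ℓ).degree < (properIndex r k ℓ : WithBot ℕ)) :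
    typeIPairing μ B P = 0 := by
  rw [typeIPairing_apply]
  exact Finset.sum_eq_zero fun ℓ _ => mul_comm P (B ℓ) ▸ hP.map_mul_eq_zero ℓ (hB ℓ)

variable {A : ℕ → Fin r → Polynomial ℂ} {m : ℕ}

lemma TypeINormalized.typeIPairing_X_pow (hA : TypeINormalized r μ A) (hm : 1 ≤ m) {i : ℕ}
    (hi : i < m) : typeIPairing μ (A m) (X ^ i) = if i = m - 1 then 1 else 0 := by
  rw [typeIPairing_apply]
  split_ifs with h
  · exact h ▸ (hA m hm).2.2
  · exact (hA m hm).2.1 i (by omega)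

lemma TypeINormalized.typeIPairing_eq_coeff (hA : TypeINormalized r μ A) (hm : 1 ≤ m)
    {Q : Polynomial ℂ} (hQ : Q.degree < m) : typeIPairing μ (A m) Q = Q.coeff (m - 1) := by
  rw [Polynomial.linearMap_eq_sum_coeff_smul _ hQ,
    Finset.sum_congr rfl fun i hi => by rw [hA.typeIPairing_X_pow hm (Finset.mem_range.mp hi)]]
  simp only [smul_eq_mul, mul_ite, mul_one, mul_zero, Finset.sum_ite_eq', Finset.mem_range]
  exact if_pos (by omega)

lemma TypeINormalized.typeIPairing_biorthogonal (hA : TypeINormalized r μ A) (hm : 1 ≤ m)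
    {k : ℕ} {P : Polynomial ℂ} (hP : TypeIISol r μ k P) (hmonic : P.Monic)
    (hdeg : P.natDegree = k) :
    typeIPairing μ (A m) P = if k + 1 = m then 1 else 0 := by
  rcases le_or_gt m k with hmk | hkm
  · rw [if_neg (by omega)]
    exact hP.typeIPairing_eq_zero fun ℓ =>
      (hA m hm).1 ℓ |>.trans_le (by exact_mod_cast properIndex_mono r hmk ℓ)
  · have hPm : P.degree < m := degree_le_natDegree.trans_lt (by rw [hdeg]; exact_mod_cast hkm)
    rw [hA.typeIPairing_eq_coeff hm hPm]
    split_ifs with h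
    · rw [show m - 1 = P.natDegree by omega, hmonic.coeff_natDegree]
    · exact coeff_eq_zero_of_natDegree_lt (by omega)

end typeIPairing

theorem recurrence_coefficients_integral_general (r : ℕ)
    (μ : Fin r → (Polynomial ℂ →ₗ[ℂ] ℂ))
    (P : ℕ → Polynomial ℂ)
    (hmonic : ∀ n, (P n).Monic) (hdeg : ∀ n, (P n).natDegree = n)
    (horth : ∀ n, TypeIISol r μ n (P n))
    (A : ℕ → Fin r → Polynomial ℂ) (hA : TypeINormalized r μ A)
    (a : ℕ → ℕ → ℂ)
    (hrec : ∀ n, X * P n = P (n + 1) +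
      ∑ j ∈ Finset.range (r + 1), a n j • (if j ≤ n then P (n - j) else 0)) :
    ∀ n, ∀ j ≤ min r n,
      a n j = ∑ ℓ : Fin r, μ ℓ (X * P n * A (n + 1 - j) ℓ) := by
  intro n j hj
  obtain ⟨hjr, hjn⟩ := le_min_iff.mp hj
  have hm : 1 ≤ n + 1 - j := by omega
  set L := typeIPairing μ (A (n + 1 - j))
  have hL k : L (P k) = if k + 1 = n + 1 - j then 1 else 0 :=
    hA.typeIPairing_biorthogonal hm (horth k) (hmonic k) (hdeg k)
  have hterm k : a n k • L (if k ≤ n then P (n - k) else 0) = if k = j then a n j else 0 := by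
    by_cases hk : k ≤ n
    · rw [if_pos hk, hL]
      by_cases hkj : k = j
      · rw [if_pos (by omega), if_pos hkj, hkj, smul_eq_mul, mul_one]
      · rw [if_neg (by omega), if_neg hkj, smul_zero]
    · rw [if_neg hk, if_neg (by omega), map_zero, smul_zero]
  symm
  calc ∑ ℓ, μ ℓ (X * P n * A (n + 1 - j) ℓ) = L (X * P n) := (typeIPairing_apply _ _).symm
    _ = ∑ k ∈ Finset.range (r + 1), a n k • L (if k ≤ n then P (n - k) else 0) := by
      rw [hrec, map_add, map_sum, hL, if_neg (by omega), zero_add]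
      simp only [map_smul]
    _ = a n j := by
      rw [Finset.sum_congr rfl fun k _ => hterm k, Finset.sum_ite_eq', if_pos]
      exact Finset.mem_range.mpr (by omega)

/-- integral representation of the recurrence coefficients:
`a_{n,j} = ∫ x P_n(x) ∑_ℓ A_{n+1-j,ℓ}(x) dμ_ℓ(x)` for `j = 0,…,min(r,n)`. -/
theorem recurrence_coefficients_integral (r : ℕ) (hr : 0 < r)
    (μ : Fin r → (Polynomial ℂ →ₗ[ℂ] ℂ)) (hwc : WeaklyComplete r μ)
    (P : ℕ → Polynomial ℂ)
    (hmonic : ∀ n, (P n).Monic) (hdeg : ∀ n, (P n).natDegree = n)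
    (horth : ∀ n, TypeIISol r μ n (P n))
    (A : ℕ → Fin r → Polynomial ℂ) (hA : TypeINormalized r μ A)
    (a : ℕ → ℕ → ℂ)
    (hrec : ∀ n, X * P n = P (n + 1) +
      ∑ j ∈ Finset.range (r + 1), a n j • (if j ≤ n then P (n - j) else 0)) :
    ∀ n, ∀ j ≤ min r n,
      a n j = ∑ ℓ : Fin r, μ ℓ (X * P n * A (n + 1 - j) ℓ) :=
  recurrence_coefficients_integral_general r μ P hmonic hdeg horth A hA a hrec
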